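/- arXiv:2408.06395 — 2 statements merged into one kernel-verified Lean document; each statement's English description precedes it below -/
import Mathlib

section
/- Let n ≥ d ≥ 1, let A ∈ ℝ^{n×d} have full column rank with rows a_1ᵀ,…,a_nᵀ, and let T ≥ 1. Let w_1,…,w_T ∈ ℝⁿ be strictly positive vectors with w_{1,i} = d/n for all i, and let the vectors ŵ_1,…,ŵ_{T+1} ∈ ℝⁿ be defined by ŵ_{1,i} = d/n and ŵ_{k+1,i} = w_{k,i}·h_i(w_k) for k ∈ [T]. Assume 0 < ŵ_{k,i} ≤ 1 for all k ∈ [T+1] and i ∈ [n]. Let w̃_1,…,w̃_T and w̄_1,…,w̄_T be any strictly positive vectors in ℝⁿ, and set u = (1/T)·Σ_{k=1}^T w_k. Then for every i ∈ [n], φ_i(u) ≤ (1/T)·log(n/d) + (1/T)·Σ_{k=1}^T log(ŵ_{k,i}/w̃_{k,i}) + (1/T)·Σ_{k=1}^T log(w̃_{k,i}/w̄_{k,i}) + (1/T)·Σ_{k=1}^T log(w̄_{k,i}/w_{k,i}). -/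
open Matrix

/-- `h_i(w) = a_iᵀ (Aᵀ diag(w) A)⁻¹ a_i`, where `a_iᵀ` is the `i`-th row of `A`. -/
noncomputable def hFun {n d : ℕ} (A : Matrix (Fin n) (Fin d) ℝ) (w : Fin n → ℝ)
    (i : Fin n) : ℝ :=
  A i ⬝ᵥ ((Aᵀ * Matrix.diagonal w * A)⁻¹).mulVec (A i)

/-- `φ_i(w) = log h_i(w)`. -/
noncomputable def phiFun {n d : ℕ} (A : Matrix (Fin n) (Fin d) ℝ) (w : Fin n → ℝ)
    (i : Fin n) : ℝ :=
  Real.log (hFun A w i)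


-- quadratic form lemma
lemma quad_form {n d : ℕ} (A : Matrix (Fin n) (Fin d) ℝ) (v : Fin n → ℝ) (x : Fin d → ℝ) :
    x ⬝ᵥ (Aᵀ * Matrix.diagonal v * A) *ᵥ x = ∑ j, v j * ((A *ᵥ x) j)^2 := by
  rw [← Matrix.mulVec_mulVec, ← Matrix.mulVec_mulVec, Matrix.dotProduct_mulVec,
    Matrix.vecMul_transpose]
  simp [dotProduct, Matrix.mulVec_diagonal]
  ring_nf
  congr 1; ext j; ring

-- symmetry of M
lemma M_symm {n d : ℕ} (A : Matrix (Fin n) (Fin d) ℝ) (v : Fin n → ℝ) :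
    (Aᵀ * Matrix.diagonal v * A).IsHermitian := by
  unfold Matrix.IsHermitian
  rw [conjTranspose_eq_transpose_of_trivial, Matrix.transpose_mul, Matrix.transpose_mul,
    Matrix.transpose_transpose, Matrix.diagonal_transpose, Matrix.mul_assoc]

lemma M_posDef {n d : ℕ} (A : Matrix (Fin n) (Fin d) ℝ) (hrank : A.rank = d)
    {v : Fin n → ℝ} (hv : ∀ i, 0 < v i) :
    (Aᵀ * Matrix.diagonal v * A).PosDef := by
  have hinj : Function.Injective A.mulVecLin := by
    rw [← LinearMap.ker_eq_bot]
    have h1 := LinearMap.finrank_range_add_finrank_ker A.mulVecLin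
    rw [show Module.finrank ℝ (LinearMap.range A.mulVecLin) = d from hrank] at h1
    simp only [Module.finrank_pi, Fintype.card_fin] at h1
    have : Module.finrank ℝ (LinearMap.ker A.mulVecLin) = 0 := by omega
    exact Submodule.finrank_eq_zero.mp this
  refine Matrix.PosDef.of_dotProduct_mulVec_pos (M_symm A v) (fun x hx => ?_)
  have hAx : A *ᵥ x ≠ 0 := by
    intro h
    apply hx
    have := hinj (a₁ := x) (a₂ := 0)
    simp only [Matrix.mulVecLin_apply, Matrix.mulVec_zero] at this
    exact this h
  have hD := (Matrix.PosDef.diagonal hv).dotProduct_mulVec_pos hAx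
  simp only [star_trivial] at hD ⊢
  calc 0 < (A *ᵥ x) ⬝ᵥ (Matrix.diagonal v) *ᵥ (A *ᵥ x) := hD
    _ = x ⬝ᵥ (Aᵀ * Matrix.diagonal v * A) *ᵥ x := by
        rw [← Matrix.mulVec_mulVec, ← Matrix.mulVec_mulVec, Matrix.dotProduct_mulVec x,
          Matrix.vecMul_transpose]

lemma psd_symm {d : ℕ} {M : Matrix (Fin d) (Fin d) ℝ} (hM : M.IsHermitian)
    (x y : Fin d → ℝ) : x ⬝ᵥ M *ᵥ y = y ⬝ᵥ M *ᵥ x := by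
  have hMt : Mᵀ = M := by
    rw [← conjTranspose_eq_transpose_of_trivial]; exact hM
  rw [Matrix.dotProduct_mulVec x, ← hMt, Matrix.vecMul_transpose, hMt, dotProduct_comm]

lemma psd_cauchy {d : ℕ} {M : Matrix (Fin d) (Fin d) ℝ} (hM : M.PosSemidef)
    (x y : Fin d → ℝ) :
    (x ⬝ᵥ M *ᵥ y)^2 ≤ (x ⬝ᵥ M *ᵥ x) * (y ⬝ᵥ M *ᵥ y) := by
  have key : ∀ t : ℝ, 0 ≤ (x ⬝ᵥ M *ᵥ x) * (t * t) + (2 * (x ⬝ᵥ M *ᵥ y)) * t + (y ⬝ᵥ M *ᵥ y) := by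
    intro t
    have h0 := hM.dotProduct_mulVec_nonneg (t • x + y)
    simp only [star_trivial] at h0
    have hexp : (t • x + y) ⬝ᵥ M *ᵥ (t • x + y)
        = (x ⬝ᵥ M *ᵥ x) * (t * t) + (2 * (x ⬝ᵥ M *ᵥ y)) * t + (y ⬝ᵥ M *ᵥ y) := by
      rw [Matrix.mulVec_add, Matrix.mulVec_smul]
      simp only [dotProduct_add, add_dotProduct, smul_dotProduct,
        dotProduct_smul, smul_eq_mul]
      rw [psd_symm hM.1 y x]
      ring
    rw [hexp] at h0
    exact h0
  have hd := discrim_le_zero key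
  rw [discrim] at hd
  nlinarith [hd]

lemma hFun_pos {n d : ℕ} (A : Matrix (Fin n) (Fin d) ℝ) (hrank : A.rank = d)
    {v : Fin n → ℝ} (hv : ∀ i, 0 < v i) {i : Fin n} (ha : A i ≠ 0) :
    0 < hFun A v i := by
  have hM := M_posDef A hrank hv
  have := hM.inv.dotProduct_mulVec_pos ha
  simpa [hFun, star_trivial] using this

lemma self_inner {d : ℕ} {M : Matrix (Fin d) (Fin d) ℝ} (hM : M.PosDef) (a : Fin d → ℝ) :
    (M⁻¹ *ᵥ a) ⬝ᵥ M *ᵥ (M⁻¹ *ᵥ a) = a ⬝ᵥ M⁻¹ *ᵥ a := by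
  rw [Matrix.mulVec_mulVec, Matrix.mul_nonsing_inv _ ((Matrix.isUnit_iff_isUnit_det M).mp hM.isUnit),
    Matrix.one_mulVec, dotProduct_comm]

lemma log_avg {T : ℕ} (hT : 1 ≤ T) (s : ℝ) (hs : 0 < s) (h : ℕ → ℝ)
    (hpos : ∀ k ∈ Finset.Icc 1 T, 0 < h k)
    (hle : (1/(T:ℝ)) * ∑ k ∈ Finset.Icc 1 T, (h k)⁻¹ ≤ s⁻¹) :
    Real.log s ≤ (1/(T:ℝ)) * ∑ k ∈ Finset.Icc 1 T, Real.log (h k) := by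
  have hT0 : (0:ℝ) < T := by exact_mod_cast hT
  have hconc : ConcaveOn ℝ (Set.Ioi 0) Real.log := strictConcaveOn_log_Ioi.concaveOn
  have hjen := hconc.le_map_sum (t := Finset.Icc 1 T) (w := fun _ => 1/(T:ℝ))
    (p := fun k => (h k)⁻¹)
    (fun k _ => by positivity)
    (by simp [Finset.sum_const, Nat.card_Icc]; field_simp)
    (fun k hk => Set.mem_Ioi.mpr (inv_pos.mpr (hpos k hk)))
  simp only [smul_eq_mul] at hjen
  have hne : (Finset.Icc 1 T).Nonempty := by
    refine ⟨1, ?_⟩; simp [hT]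
  have hsum_pos : 0 < ∑ k ∈ Finset.Icc 1 T, (1/(T:ℝ)) * (h k)⁻¹ :=
    Finset.sum_pos (fun k hk => by have := hpos k hk; positivity) hne
  have hle' : ∑ k ∈ Finset.Icc 1 T, (1/(T:ℝ)) * (h k)⁻¹ ≤ s⁻¹ := by
    rwa [← Finset.mul_sum]
  have hlog := Real.log_le_log hsum_pos hle'
  have hchain : ∑ k ∈ Finset.Icc 1 T, (1/(T:ℝ)) * Real.log ((h k)⁻¹) ≤ Real.log (s⁻¹) :=
    le_trans hjen hlog
  rw [Real.log_inv] at hchain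
  have : ∑ k ∈ Finset.Icc 1 T, (1/(T:ℝ)) * Real.log ((h k)⁻¹)
      = -((1/(T:ℝ)) * ∑ k ∈ Finset.Icc 1 T, Real.log (h k)) := by
    rw [Finset.mul_sum, ← Finset.sum_neg_distrib]
    exact Finset.sum_congr rfl fun k hk => by rw [Real.log_inv]; ring
  rw [this] at hchain
  linarith

theorem telescoping
    (n d T : ℕ) (hd : 1 ≤ d) (hdn : d ≤ n) (hT : 1 ≤ T)
    (A : Matrix (Fin n) (Fin d) ℝ) (hrank : A.rank = d)
    (w wHat wTilde wBar : ℕ → Fin n → ℝ)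
    (hw1 : ∀ i, w 1 i = (d : ℝ) / n)
    (hwpos : ∀ k ∈ Finset.Icc 1 T, ∀ i, 0 < w k i)
    (hwHat1 : ∀ i, wHat 1 i = (d : ℝ) / n)
    (hwHatSucc : ∀ k ∈ Finset.Icc 1 T, ∀ i, wHat (k + 1) i = w k i * hFun A (w k) i)
    (hwHatBound : ∀ k ∈ Finset.Icc 1 (T + 1), ∀ i, 0 < wHat k i ∧ wHat k i ≤ 1)
    (hwTildePos : ∀ k ∈ Finset.Icc 1 T, ∀ i, 0 < wTilde k i)
    (hwBarPos : ∀ k ∈ Finset.Icc 1 T, ∀ i, 0 < wBar k i)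
    (u : Fin n → ℝ) (hu : u = fun i => (1 / (T : ℝ)) * ∑ k ∈ Finset.Icc 1 T, w k i) :
    ∀ i : Fin n,
      phiFun A u i ≤
        (1 / (T : ℝ)) * Real.log ((n : ℝ) / d) +
          (1 / (T : ℝ)) * ∑ k ∈ Finset.Icc 1 T, Real.log (wHat k i / wTilde k i) +
            (1 / (T : ℝ)) * ∑ k ∈ Finset.Icc 1 T, Real.log (wTilde k i / wBar k i) +
              (1 / (T : ℝ)) * ∑ k ∈ Finset.Icc 1 T, Real.log (wBar k i / w k i) := by
  intro i
  have h1T : (1:ℕ) ∈ Finset.Icc 1 T := by simp [hT]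
  have hw1pos : 0 < w 1 i := hwpos 1 h1T i
  have ha : A i ≠ 0 := by
    intro ha
    have h2 : wHat 2 i = w 1 i * hFun A (w 1) i := hwHatSucc 1 h1T i
    have h2pos : 0 < wHat 2 i := (hwHatBound 2 (by rw [Finset.mem_Icc]; omega) i).1
    have hz : hFun A (w 1) i = 0 := by simp [hFun, ha]
    rw [hz, mul_zero] at h2
    rw [h2] at h2pos; exact lt_irrefl 0 h2pos
  have hT0 : (0:ℝ) < T := by exact_mod_cast hT
  have hupos : ∀ j, 0 < u j := by
    intro j
    rw [hu]
    have : 0 < ∑ k ∈ Finset.Icc 1 T, w k j :=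
      Finset.sum_pos (fun k hk => hwpos k hk j) ⟨1, h1T⟩
    positivity
  set s := hFun A u i with hsdef
  have hs : 0 < s := hFun_pos A hrank hupos ha
  set a := A i with hadef
  set Mu := Aᵀ * Matrix.diagonal u * A with hMu
  have hMuPD : Mu.PosDef := M_posDef A hrank hupos
  set y := Mu⁻¹ *ᵥ a with hy
  have hyy : y ⬝ᵥ Mu *ᵥ y = s := self_inner hMuPD a
  have hya : y ⬝ᵥ a = s := by rw [dotProduct_comm]; rfl
  have hkpos : ∀ k ∈ Finset.Icc 1 T, 0 < hFun A (w k) i :=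
    fun k hk => hFun_pos A hrank (hwpos k hk) ha
  have hkey : ∀ k ∈ Finset.Icc 1 T,
      s^2 ≤ (y ⬝ᵥ (Aᵀ * Matrix.diagonal (w k) * A) *ᵥ y) * hFun A (w k) i := by
    intro k hk
    set Mk := Aᵀ * Matrix.diagonal (w k) * A with hMk
    have hMkPD : Mk.PosDef := M_posDef A hrank (hwpos k hk)
    set z := Mk⁻¹ *ᵥ a with hz
    have hcs := psd_cauchy hMkPD.posSemidef y z
    have hMz : Mk *ᵥ z = a := by
      rw [hz, Matrix.mulVec_mulVec,
        Matrix.mul_nonsing_inv _ ((Matrix.isUnit_iff_isUnit_det Mk).mp hMkPD.isUnit),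
        Matrix.one_mulVec]
    rw [hMz, hya] at hcs
    have hza : z ⬝ᵥ a = hFun A (w k) i := by rw [dotProduct_comm]; rfl
    rw [hza] at hcs
    exact hcs
  have hquad : ∀ v : Fin n → ℝ, y ⬝ᵥ (Aᵀ * Matrix.diagonal v * A) *ᵥ y
      = ∑ j, v j * ((A *ᵥ y) j)^2 := fun v => quad_form A v y
  have hsavg : s = (1/(T:ℝ)) * ∑ k ∈ Finset.Icc 1 T,
      (y ⬝ᵥ (Aᵀ * Matrix.diagonal (w k) * A) *ᵥ y) := by
    rw [← hyy, hMu, hquad]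
    rw [Finset.mul_sum]
    have hjj : ∀ j : Fin n, u j * ((A *ᵥ y) j)^2
        = ∑ k ∈ Finset.Icc 1 T, (1/(T:ℝ)) * (w k j * ((A *ᵥ y) j)^2) := by
      intro j
      simp only [hu]
      rw [mul_assoc, Finset.sum_mul, Finset.mul_sum]
    rw [Finset.sum_congr rfl (fun j _ => hjj j), Finset.sum_comm]
    try exact Finset.sum_congr rfl fun k _ => by rw [hquad, Finset.mul_sum]
  have hle : (1/(T:ℝ)) * ∑ k ∈ Finset.Icc 1 T, (hFun A (w k) i)⁻¹ ≤ s⁻¹ := by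
    have step : ∀ k ∈ Finset.Icc 1 T, (hFun A (w k) i)⁻¹
        ≤ (y ⬝ᵥ (Aᵀ * Matrix.diagonal (w k) * A) *ᵥ y) / s^2 := by
      intro k hk
      rw [inv_eq_one_div, div_le_div_iff₀ (hkpos k hk) (by positivity)]
      have := hkey k hk
      linarith
    calc (1/(T:ℝ)) * ∑ k ∈ Finset.Icc 1 T, (hFun A (w k) i)⁻¹
        ≤ (1/(T:ℝ)) * ∑ k ∈ Finset.Icc 1 T,
            (y ⬝ᵥ (Aᵀ * Matrix.diagonal (w k) * A) *ᵥ y) / s^2 := by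
          exact mul_le_mul_of_nonneg_left (Finset.sum_le_sum step) (by positivity)
      _ = s⁻¹ := by
          rw [← Finset.sum_div, ← mul_div_assoc, ← hsavg, sq, ← div_div,
            div_self hs.ne', one_div]
  have hjen : Real.log s ≤ (1/(T:ℝ)) * ∑ k ∈ Finset.Icc 1 T, Real.log (hFun A (w k) i) :=
    log_avg hT s hs (fun k => hFun A (w k) i) hkpos hle
  have hHatpos : ∀ k ∈ Finset.Icc 1 (T+1), 0 < wHat k i := fun k hk => (hwHatBound k hk i).1
  have hmem' : ∀ k, k ∈ Finset.Icc 1 T → k ∈ Finset.Icc 1 (T+1) := by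
    intro k hk; rw [Finset.mem_Icc] at *; omega
  have hlogh : ∀ k ∈ Finset.Icc 1 T, Real.log (hFun A (w k) i)
      = (Real.log (wHat (k+1) i) - Real.log (wHat k i))
        + (Real.log (wHat k i) - Real.log (w k i)) := by
    intro k hk
    have hsucc := hwHatSucc k hk i
    have hlm : Real.log (wHat (k+1) i) = Real.log (w k i) + Real.log (hFun A (w k) i) := by
      rw [hsucc, Real.log_mul (hwpos k hk i).ne' (hkpos k hk).ne']
    linarith
  have htel : ∑ k ∈ Finset.Icc 1 T,
      (Real.log (wHat (k+1) i) - Real.log (wHat k i))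
      = Real.log (wHat (T+1) i) - Real.log (wHat 1 i) := by
    have hIcc : Finset.Icc 1 T = Finset.Ico 1 (T+1) := by rw [Finset.Ico_add_one_right_eq_Icc]
    rw [hIcc, Finset.sum_Ico_eq_sum_range]
    simp only [Nat.add_sub_cancel]
    have := Finset.sum_range_sub (f := fun j => Real.log (wHat (j+1) i)) T
    convert this using 2 with j
    ring_nf
  have hsum_h : ∑ k ∈ Finset.Icc 1 T, Real.log (hFun A (w k) i)
      = (Real.log (wHat (T+1) i) - Real.log (wHat 1 i))
        + ∑ k ∈ Finset.Icc 1 T, (Real.log (wHat k i) - Real.log (w k i)) := by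
    rw [Finset.sum_congr rfl hlogh, Finset.sum_add_distrib, htel]
  have hTop : Real.log (wHat (T+1) i) ≤ 0 := by
    have hb := hwHatBound (T+1) (by rw [Finset.mem_Icc]; omega) i
    exact Real.log_nonpos hb.1.le hb.2
  have hd0 : (0:ℝ) < d := by exact_mod_cast hd
  have hn0 : (0:ℝ) < n := by
    have : (d:ℝ) ≤ n := by exact_mod_cast hdn
    linarith
  have hBot : Real.log (wHat 1 i) = - Real.log ((n:ℝ)/d) := by
    rw [hwHat1 i, ← Real.log_inv, inv_div]
  have hfinal : (1/(T:ℝ)) * ∑ k ∈ Finset.Icc 1 T, Real.log (hFun A (w k) i)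
      ≤ (1/(T:ℝ)) * Real.log ((n:ℝ)/d)
        + (1/(T:ℝ)) * ∑ k ∈ Finset.Icc 1 T, (Real.log (wHat k i) - Real.log (w k i)) := by
    rw [hsum_h, mul_add, hBot]
    have h1 : (1/(T:ℝ)) * (Real.log (wHat (T+1) i) - -Real.log ((n:ℝ)/d))
        ≤ (1/(T:ℝ)) * Real.log ((n:ℝ)/d) := by
      apply mul_le_mul_of_nonneg_left _ (by positivity)
      linarith
    linarith
  have hRHScomb : ∀ k ∈ Finset.Icc 1 T,
      Real.log (wHat k i / wTilde k i) + Real.log (wTilde k i / wBar k i)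
        + Real.log (wBar k i / w k i)
      = Real.log (wHat k i) - Real.log (w k i) := by
    intro k hk
    rw [Real.log_div (hHatpos k (hmem' k hk)).ne' (hwTildePos k hk i).ne',
      Real.log_div (hwTildePos k hk i).ne' (hwBarPos k hk i).ne',
      Real.log_div (hwBarPos k hk i).ne' (hwpos k hk i).ne']
    ring
  have hsplit : (1/(T:ℝ)) * ∑ k ∈ Finset.Icc 1 T, Real.log (wHat k i / wTilde k i)
      + (1/(T:ℝ)) * ∑ k ∈ Finset.Icc 1 T, Real.log (wTilde k i / wBar k i)
      + (1/(T:ℝ)) * ∑ k ∈ Finset.Icc 1 T, Real.log (wBar k i / w k i)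
      = (1/(T:ℝ)) * ∑ k ∈ Finset.Icc 1 T, (Real.log (wHat k i) - Real.log (w k i)) := by
    rw [← mul_add, ← mul_add, ← Finset.sum_add_distrib, ← Finset.sum_add_distrib]
    congr 1
    exact Finset.sum_congr rfl hRHScomb
  have hphi : phiFun A u i = Real.log s := rfl
  rw [hphi]
  linarith [le_trans hjen hfinal]
end

section
/- Let σ ∈ (0, 0.1] and let Z be a random variable with the truncated Gaussian distribution N^T(0, σ², [−1/2, 1/2]). Then E[log(1/(1 + Z))] ≤ 2σ. -/
open MeasureTheory
open scoped NNReal ENNReal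

/-- Standard Gaussian density `φ(t) = e^{-t²/2}/√(2π)`. -/
noncomputable def gaussPDF (t : ℝ) : ℝ := Real.exp (-t ^ 2 / 2) / Real.sqrt (2 * Real.pi)

/-- Standard Gaussian cumulative distribution function `Φ`. -/
noncomputable def gaussCDF (x : ℝ) : ℝ := ∫ t in Set.Iic x, gaussPDF t

/-- `C_σ = Φ(1/(2σ)) − Φ(−1/(2σ))`. -/
noncomputable def Csigma (σ : ℝ) : ℝ := gaussCDF (1 / (2 * σ)) - gaussCDF (-(1 / (2 * σ)))

/-- `C_{β,σ} = Φ((1/2 − β)/σ) − Φ((−1/2 − β)/σ)`. -/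
noncomputable def Cbetasigma (β σ : ℝ) : ℝ :=
  gaussCDF ((1 / 2 - β) / σ) - gaussCDF ((-(1 / 2) - β) / σ)

/-- `γ_{β,σ} = C_σ / C_{β,σ}`. -/
noncomputable def gammaBS (β σ : ℝ) : ℝ := Csigma σ / Cbetasigma β σ

/-- Density of the truncated Gaussian distribution `N^T(μ, σ², [−1/2, 1/2])`. -/
noncomputable def truncPDF (μ σ : ℝ) (z : ℝ) : ℝ :=
  if z ∈ Set.Icc (-(1 / 2) : ℝ) (1 / 2) then
    gaussPDF ((z - μ) / σ) /
      (σ * (gaussCDF ((1 / 2 - μ) / σ) - gaussCDF ((-(1 / 2) - μ) / σ)))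
  else 0


lemma gaussPDF_nonneg (t : ℝ) : 0 ≤ gaussPDF t :=
  div_nonneg (Real.exp_nonneg _) (Real.sqrt_nonneg _)

lemma gaussPDF_even (t : ℝ) : gaussPDF (-t) = gaussPDF t := by
  simp [gaussPDF, neg_pow]

lemma continuous_gaussPDF : Continuous gaussPDF := by
  unfold gaussPDF; fun_prop

lemma integrable_gaussPDF : Integrable gaussPDF := by
  have h : Integrable (fun t : ℝ => Real.exp (-(1/2) * t ^ 2)) :=
    integrable_exp_neg_mul_sq (by norm_num)
  have : gaussPDF = fun t => Real.exp (-(1/2) * t ^ 2) * (Real.sqrt (2 * Real.pi))⁻¹ := by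
    funext t; rw [gaussPDF, div_eq_mul_inv]; ring_nf
  rw [this]
  exact h.mul_const _

lemma log_bound {z : ℝ} (h1 : -(1/2) ≤ z) (h2 : z ≤ 1/2) :
    Real.log (1 / (1 + z)) ≤ -z + (2/5) * |z| := by
  have hz : (0:ℝ) < 1 + z := by linarith
  rw [one_div, Real.log_inv]
  rcases le_or_gt 0 z with hz0 | hz0
  · rw [abs_of_nonneg hz0]
    have h3 : Real.log (1 + z)⁻¹ ≤ (1 + z)⁻¹ - 1 :=
      Real.log_le_sub_one_of_pos (by positivity)
    rw [Real.log_inv] at h3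
    have h4 : 1 - (1 + z)⁻¹ ≤ Real.log (1 + z) := by linarith
    have h5 : (3/5 : ℝ) * z ≤ 1 - (1 + z)⁻¹ := by
      have : (1 + z)⁻¹ = 1 - z / (1 + z) := by field_simp; ring
      rw [this]
      have : (3/5 : ℝ) * z ≤ z / (1 + z) := by
        rw [le_div_iff₀ hz]; nlinarith
      linarith
    linarith
  · rw [abs_of_neg hz0]
    have key : Real.exp (7/5 * z) ≤ 1 + z := by
      have hc := convexOn_exp.2 (Set.mem_univ (-(7/10) : ℝ)) (Set.mem_univ (0:ℝ))
        (show (0:ℝ) ≤ -2*z by linarith) (show (0:ℝ) ≤ 1 + 2*z by linarith)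
        (show (-2*z) + (1+2*z) = 1 by ring)
      simp only [smul_eq_mul, mul_zero, Real.exp_zero] at hc
      have he : (-2*z) * (-(7/10)) + 0 = 7/5 * z := by ring
      rw [he] at hc
      have hlt : Real.exp (-(7/10)) < 1/2 := by
        have h2e : (2:ℝ) < Real.exp (7/10) := by
          have hl := Real.log_two_lt_d9
          calc (2:ℝ) = Real.exp (Real.log 2) := (Real.exp_log two_pos).symm
          _ < Real.exp (7/10) := Real.exp_lt_exp.2 (by norm_num at hl ⊢; linarith)
        rw [Real.exp_neg]
        have hE := Real.exp_pos (7/10)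
        have hinv : Real.exp (7/10) * (Real.exp (7/10))⁻¹ = 1 := mul_inv_cancel₀ (ne_of_gt hE)
        nlinarith [inv_pos.2 hE]
      nlinarith [Real.exp_pos (-(7/10))]
    have : 7/5 * z ≤ Real.log (1 + z) := by
      rw [← Real.log_exp (7/5 * z)]
      exact Real.log_le_log (Real.exp_pos _) key
    linarith

lemma sqrt_two_pi_pos : 0 < Real.sqrt (2 * Real.pi) :=
  Real.sqrt_pos.2 (by positivity)

lemma D_lower (σ : ℝ) (hσ0 : 0 < σ) (hσ1 : σ ≤ 0.1) :
    5/6 / Real.sqrt (2*Real.pi) ≤ gaussCDF ((1/2 - 0)/σ) - gaussCDF ((-(1/2) - 0)/σ) := by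
  have hb : (1:ℝ) ≤ (1/2 - 0)/σ := by
    rw [le_div_iff₀ hσ0]; norm_num at hσ1 ⊢; linarith
  have ha : (-(1/2) - 0)/σ ≤ 0 := by
    apply div_nonpos_of_nonpos_of_nonneg <;> linarith
  have key : gaussCDF ((1/2 - 0)/σ) - gaussCDF ((-(1/2) - 0)/σ)
      = ∫ t in ((-(1/2) - 0)/σ)..((1/2 - 0)/σ), gaussPDF t := by
    rw [gaussCDF, gaussCDF]
    exact intervalIntegral.integral_Iic_sub_Iic integrable_gaussPDF.integrableOn
      integrable_gaussPDF.integrableOn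
  rw [key, intervalIntegral.integral_of_le (by linarith)]
  have step1 : (∫ t in Set.Ioc (0:ℝ) 1, gaussPDF t)
      ≤ ∫ t in Set.Ioc ((-(1/2) - 0)/σ) ((1/2 - 0)/σ), gaussPDF t := by
    apply setIntegral_mono_set integrable_gaussPDF.integrableOn
      (ae_of_all _ gaussPDF_nonneg)
    exact (Set.Ioc_subset_Ioc ha hb).eventuallyLE
  refine le_trans ?_ step1
  have step2 : (∫ t in Set.Ioc (0:ℝ) 1, (1 - t^2/2) / Real.sqrt (2*Real.pi))
      ≤ ∫ t in Set.Ioc (0:ℝ) 1, gaussPDF t := by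
    apply setIntegral_mono_on
    · exact (by fun_prop : Continuous fun t : ℝ => (1 - t^2/2) / Real.sqrt (2*Real.pi)).integrableOn_Ioc
    · exact integrable_gaussPDF.integrableOn
    · exact measurableSet_Ioc
    · intro t _
      rw [gaussPDF]
      gcongr
      nlinarith [Real.add_one_le_exp (-t^2/2)]
  refine le_trans ?_ step2
  rw [← intervalIntegral.integral_of_le (by norm_num : (0:ℝ) ≤ 1),
    intervalIntegral.integral_div]
  have hc2 : IntervalIntegrable (fun t : ℝ => t^2/2) volume 0 1 :=
    ((by fun_prop : Continuous fun t : ℝ => t^2/2)).intervalIntegrable _ _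
  have hpoly : (∫ t in (0:ℝ)..1, (1 - t^2/2)) = 5/6 := by
    rw [intervalIntegral.integral_sub intervalIntegrable_const hc2,
      intervalIntegral.integral_div, integral_pow]
    norm_num
  rw [hpoly]

lemma ftc_bound (σ : ℝ) (hσ0 : 0 < σ) :
    ∫ z in (0:ℝ)..(1/2), z * Real.exp (-(z/σ)^2/2) ≤ σ^2 := by
  have hd : ∀ z : ℝ, HasDerivAt (fun z => -σ^2 * Real.exp (-(z/σ)^2/2))
      (z * Real.exp (-(z/σ)^2/2)) z := by
    intro z
    have h1 : HasDerivAt (fun z : ℝ => z/σ) (1/σ) z := by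
      simpa using (hasDerivAt_id z).div_const σ
    have h2 := (((h1.pow 2).neg.div_const 2).exp).const_mul (-σ^2)
    refine h2.congr_deriv ?_
    show -σ^2 * (Real.exp (-(z/σ)^2/2) * _) = _
    field_simp
    norm_num
    field_simp
  have hcont : Continuous fun z : ℝ => z * Real.exp (-(z/σ)^2/2) := by fun_prop
  rw [intervalIntegral.integral_eq_sub_of_hasDerivAt (fun z _ => hd z)
    (hcont.intervalIntegrable _ _)]
  have h1 := Real.exp_pos (-(1/2/σ)^2/2)
  have h2 : Real.exp (-(0/σ)^2/2) = 1 := by norm_num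
  rw [h2]
  nlinarith

theorem truncated_gaussian_log_expectation
    {Ω : Type*} [MeasurableSpace Ω] (μ : Measure Ω) [IsProbabilityMeasure μ]
    (σ : ℝ) (hσ0 : 0 < σ) (hσ1 : σ ≤ 0.1)
    (Z : Ω → ℝ)
    (hZ : μ.map Z = volume.withDensity (fun z => ENNReal.ofReal (truncPDF 0 σ z))) :
    ∫ ω, Real.log (1 / (1 + Z ω)) ∂μ ≤ 2 * σ := by
  set D : ℝ := gaussCDF ((1/2 - 0)/σ) - gaussCDF ((-(1/2) - 0)/σ) with hDdef
  have hD : 5/6 / Real.sqrt (2*Real.pi) ≤ D := D_lower σ hσ0 hσ1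
  have hDpos : 0 < D := lt_of_lt_of_le (by positivity) hD
  have hσD : 0 < σ * D := mul_pos hσ0 hDpos
  set q : ℝ → ℝ := fun z => gaussPDF ((z - 0) / σ) / (σ * D) with hqdef
  have hqc : Continuous q := by
    apply Continuous.div_const
    exact continuous_gaussPDF.comp (by fun_prop)
  have hqnn : ∀ z, 0 ≤ q z := fun z => div_nonneg (gaussPDF_nonneg _) hσD.le
  have hqeven : ∀ z, q (-z) = q z := by
    intro z
    have : (-z - 0) / σ = -((z - 0)/σ) := by ring
    rw [hqdef]; simp only [this, gaussPDF_even]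
  have hp_eq : truncPDF 0 σ = Set.indicator (Set.Icc (-(1/2):ℝ) (1/2)) q := by
    funext z
    rw [truncPDF]
    by_cases h : z ∈ Set.Icc (-(1/2):ℝ) (1/2)
    · rw [if_pos h, Set.indicator_of_mem h]
    · rw [if_neg h, Set.indicator_of_notMem h]
  have hpm : Measurable (truncPDF 0 σ) := by
    rw [hp_eq]; exact hqc.measurable.indicator measurableSet_Icc
  have hpnn : ∀ z, 0 ≤ truncPDF 0 σ z := by
    intro z; rw [hp_eq]
    exact Set.indicator_nonneg (fun z _ => hqnn z) z
  set f : ℝ → ℝ := fun z => Real.log (1 / (1 + z)) with hfdef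
  have hfm : Measurable f := by
    apply Real.measurable_log.comp
    fun_prop
  -- Z is AEMeasurable
  have hm : AEMeasurable Z μ := by
    by_contra hm
    rw [Measure.map_of_not_aemeasurable hm] at hZ
    have h0 : (volume.withDensity fun z => ENNReal.ofReal (truncPDF 0 σ z))
        (Set.Icc (0:ℝ) (1/4)) = 0 := by rw [← hZ]; rfl
    rw [withDensity_apply _ measurableSet_Icc] at h0
    set c : ℝ := Real.exp (-((1/4)/σ)^2/2) / Real.sqrt (2*Real.pi) / (σ * D) with hcdef
    have hcpos : 0 < c := by positivity
    have hlow : ∀ z ∈ Set.Icc (0:ℝ) (1/4), ENNReal.ofReal c ≤ ENNReal.ofReal (truncPDF 0 σ z) := by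
      intro z hz
      apply ENNReal.ofReal_le_ofReal
      obtain ⟨hz0, hz1⟩ := hz
      have hmem : z ∈ Set.Icc (-(1/2):ℝ) (1/2) := ⟨by linarith, by linarith⟩
      rw [hp_eq, Set.indicator_of_mem hmem]
      show c ≤ gaussPDF ((z - 0)/σ) / (σ * D)
      rw [hcdef, gaussPDF]
      have hle : Real.exp (-((1/4)/σ)^2/2) ≤ Real.exp (-((z-0)/σ)^2/2) := by
        apply Real.exp_le_exp.2
        have h1 : ((z-0)/σ)^2 ≤ ((1/4)/σ)^2 := by
          gcongr
          · linarith
        linarith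
      gcongr
    have hmono : (∫⁻ _ in Set.Icc (0:ℝ) (1/4), ENNReal.ofReal c)
        ≤ ∫⁻ z in Set.Icc (0:ℝ) (1/4), ENNReal.ofReal (truncPDF 0 σ z) :=
      setLIntegral_mono hpm.ennreal_ofReal hlow
    rw [h0, nonpos_iff_eq_zero, setLIntegral_const, Real.volume_Icc, mul_eq_zero] at hmono
    rcases hmono with h | h
    · rw [ENNReal.ofReal_eq_zero] at h; linarith
    · rw [ENNReal.ofReal_eq_zero] at h; norm_num at h
  -- main computation
  show (∫ ω, f (Z ω) ∂μ) ≤ 2 * σ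
  rw [← integral_map hm hfm.aestronglyMeasurable, hZ]
  have hwd : (∫ z, f z ∂(volume.withDensity fun z => ENNReal.ofReal (truncPDF 0 σ z)))
      = ∫ z, truncPDF 0 σ z * f z := by
    have heq : (fun z => ENNReal.ofReal (truncPDF 0 σ z))
        = fun z => (((fun z => (truncPDF 0 σ z).toNNReal) z : ℝ≥0) : ℝ≥0∞) := rfl
    rw [heq, integral_withDensity_eq_integral_smul hpm.real_toNNReal f]
    congr 1; funext z
    rw [NNReal.smul_def, Real.coe_toNNReal _ (hpnn z), smul_eq_mul]
  rw [hwd, hp_eq]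
  have hindm : (fun z => Set.indicator (Set.Icc (-(1/2):ℝ) (1/2)) q z * f z)
      = Set.indicator (Set.Icc (-(1/2):ℝ) (1/2)) (fun z => q z * f z) := by
    funext z
    by_cases h : z ∈ Set.Icc (-(1/2):ℝ) (1/2)
    · rw [Set.indicator_of_mem h, Set.indicator_of_mem h]
    · rw [Set.indicator_of_notMem h, Set.indicator_of_notMem h, zero_mul]
  rw [hindm, integral_indicator measurableSet_Icc, integral_Icc_eq_integral_Ioc,
    ← intervalIntegral.integral_of_le (by norm_num : (-(1/2):ℝ) ≤ 1/2)]
  have huIcc : Set.uIcc (-(1/2):ℝ) (1/2) = Set.Icc (-(1/2):ℝ) (1/2) :=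
    Set.uIcc_of_le (by norm_num)
  have hfcont : ContinuousOn f (Set.Icc (-(1/2):ℝ) (1/2)) := by
    apply ContinuousOn.log
    · apply ContinuousOn.div continuousOn_const (by fun_prop)
      intro x hx
      have h1 : -(1/2:ℝ) ≤ x := hx.1
      intro hc
      linarith
    · intro x hx
      have h1 : (0:ℝ) < 1 + x := by have := hx.1; simp at this ⊢; linarith
      exact ne_of_gt (by positivity)
  have hint1 : IntervalIntegrable (fun z => q z * f z) volume (-(1/2)) (1/2) := by
    apply ContinuousOn.intervalIntegrable
    rw [huIcc]; exact hqc.continuousOn.mul hfcont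
  have hbc : Continuous (fun z : ℝ => -z + 2/5*|z|) :=
    continuous_neg.add (continuous_const.mul continuous_abs)
  have hint2 : IntervalIntegrable (fun z => q z * (-z + 2/5*|z|)) volume (-(1/2)) (1/2) :=
    ((hqc.mul hbc)).intervalIntegrable _ _
  have hintA : IntervalIntegrable (fun z => q z * (-z)) volume (-(1/2)) (1/2) :=
    (hqc.mul continuous_neg).intervalIntegrable _ _
  have hintB : ∀ u v : ℝ, IntervalIntegrable (fun z => q z * |z|) volume u v :=
    fun u v => (hqc.mul continuous_abs).intervalIntegrable _ _
  have stepA : (∫ z in (-(1/2):ℝ)..(1/2), q z * f z)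
      ≤ ∫ z in (-(1/2):ℝ)..(1/2), q z * (-z + 2/5*|z|) := by
    apply intervalIntegral.integral_mono_on (by norm_num) hint1 hint2
    intro x hx
    exact mul_le_mul_of_nonneg_left (log_bound hx.1 hx.2) (hqnn x)
  have hsplit : (∫ z in (-(1/2):ℝ)..(1/2), q z * (-z + 2/5*|z|))
      = (∫ z in (-(1/2):ℝ)..(1/2), q z * (-z))
        + (2/5) * ∫ z in (-(1/2):ℝ)..(1/2), q z * |z| := by
    rw [← intervalIntegral.integral_const_mul,
      ← intervalIntegral.integral_add hintA ((hintB _ _).const_mul _)]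
    apply intervalIntegral.integral_congr
    intro x _; ring
  have hodd : (∫ z in (-(1/2):ℝ)..(1/2), q z * (-z)) = 0 := by
    have h1 := intervalIntegral.integral_comp_neg (a := (-(1/2):ℝ)) (b := 1/2)
      (fun z => q z * (-z))
    simp only [hqeven, neg_neg] at h1
    have h2 : (∫ z in (-(1/2):ℝ)..(1/2), q z * (-z))
        = -∫ z in (-(1/2):ℝ)..(1/2), q z * z := by
      rw [← intervalIntegral.integral_neg]
      apply intervalIntegral.integral_congr
      intro x _; ring
    rw [h2] at h1 ⊢
    linarith
  have habs : (∫ z in (-(1/2):ℝ)..(1/2), q z * |z|)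
      = 2 * ∫ z in (0:ℝ)..(1/2), q z * |z| := by
    have hadj := intervalIntegral.integral_add_adjacent_intervals
      (a := (-(1/2):ℝ)) (b := 0) (c := 1/2) (hintB _ _) (hintB _ _)
    have hneg := intervalIntegral.integral_comp_neg (a := (0:ℝ)) (b := 1/2)
      (fun z => q z * |z|)
    simp only [hqeven, abs_neg, neg_zero] at hneg
    linarith
  have hcongr : (∫ z in (0:ℝ)..(1/2), q z * |z|) = ∫ z in (0:ℝ)..(1/2), q z * z := by
    apply intervalIntegral.integral_congr
    intro x hx
    rw [Set.uIcc_of_le (by norm_num : (0:ℝ) ≤ 1/2)] at hx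
    show q x * |x| = q x * x
    rw [abs_of_nonneg hx.1]
  have hqz : ∀ z : ℝ, q z * z = (z * Real.exp (-(z/σ)^2/2)) * (Real.sqrt (2*Real.pi) * (σ*D))⁻¹ := by
    intro z
    rw [hqdef]
    simp only [sub_zero]
    rw [gaussPDF]
    have : -(z/σ)^2/2 = -(z/σ)^2/2 := rfl
    field_simp
  have stepF : (∫ z in (0:ℝ)..(1/2), q z * z)
      ≤ σ^2 * (Real.sqrt (2*Real.pi) * (σ*D))⁻¹ := by
    simp only [hqz]
    rw [intervalIntegral.integral_mul_const]
    exact mul_le_mul_of_nonneg_right (ftc_bound σ hσ0) (by positivity)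
  -- final arithmetic
  have hsD : 5/6 ≤ Real.sqrt (2*Real.pi) * D := by
    have := (div_le_iff₀ sqrt_two_pi_pos).1 hD
    linarith [this]
  have hrw : Real.sqrt (2*Real.pi) * (σ*D) = (Real.sqrt (2*Real.pi)*D)*σ := by ring
  have hinv : σ^2 * (Real.sqrt (2*Real.pi) * (σ*D))⁻¹ = σ * (Real.sqrt (2*Real.pi)*D)⁻¹ := by
    rw [hrw, mul_inv]
    field_simp
  have hsDpos : 0 < Real.sqrt (2*Real.pi) * D := mul_pos sqrt_two_pi_pos hDpos
  have hinvle : (Real.sqrt (2*Real.pi)*D)⁻¹ ≤ 6/5 := by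
    rw [show (6:ℝ)/5 = ((5:ℝ)/6)⁻¹ by norm_num]
    exact inv_anti₀ (by norm_num) hsD
  have hq12 : (∫ z in (0:ℝ)..(1/2), q z * z) ≥ 0 := by
    apply intervalIntegral.integral_nonneg (by norm_num)
    intro x hx
    exact mul_nonneg (hqnn x) hx.1
  calc (∫ z in (-(1/2):ℝ)..(1/2), q z * f z)
      ≤ (∫ z in (-(1/2):ℝ)..(1/2), q z * (-z))
        + (2/5) * ∫ z in (-(1/2):ℝ)..(1/2), q z * |z| := by rw [← hsplit]; exact stepA
    _ = (2/5) * (2 * ∫ z in (0:ℝ)..(1/2), q z * z) := by rw [hodd, habs, hcongr]; ring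
    _ ≤ (2/5) * (2 * (σ^2 * (Real.sqrt (2*Real.pi) * (σ*D))⁻¹)) := by linarith [stepF]
    _ = (4/5) * (σ * (Real.sqrt (2*Real.pi)*D)⁻¹) := by rw [hinv]; ring
    _ ≤ 2 * σ := by nlinarith [hinvle, hσ0.le, inv_nonneg.2 hsDpos.le]
end
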